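/- arXiv:2306.13784 — 2 statements merged into one kernel-verified Lean document; each statement's English description precedes it below -/
import Mathlib

section
/- Let X₁, X₂, … be i.i.d. D-valued random variables with law μ, f Lipschitz on D compact, and for each N let u_N(ω) be a minimizer over a function class V of the empirical loss E_{N,ω}(v) = (1/N)Σᵢ|v(X_i(ω)) − f(X_i(ω))|^p. Suppose the Lipschitz constant of u_N(ω) − f is bounded by L_{X(ω)}. Then for every ω and every φ ∈ V: ‖u_N(ω) − f‖_{L^p(μ)} ≤ ((1/N)Σᵢ|φ(X_i(ω)) − f(X_i(ω))|^p)^{1/p} + L_{X(ω)} · W_p(μ, μ_{N,X(ω)}), where μ_{N,X(ω)} is the empirical measure of X₁(ω),…,X_N(ω). -/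
/-!
Write `g = u ω - f` and let `ν` be the empirical measure. For any coupling `π` of `μ` and `ν`,
Minkowski's inequality in `L^p(π)` applied to `g x = g y + (g x - g y)`, together with
`|g x - g y| ≤ L · dist x y`, gives `‖g‖_{L^p(μ)} ≤ ‖g‖_{L^p(ν)} + L (∫ dist^p dπ)^{1/p}`.
Since `t ↦ t^{1/p}` is continuous, the bound survives the infimum over couplings, producing
`L · W_p(μ, ν)`. Finally `‖g‖_{L^p(ν)}^p` is the empirical loss of `u ω`, which is at most
that of `φ`. Compactness of `D` keeps every integral finite, so the real-valued integrals
agree with the `ℝ≥0∞`-valued `L^p` seminorms.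
-/

open MeasureTheory ProbabilityTheory NNReal
open scoped ENNReal

/-- The set of couplings (transport plans) between two measures. -/
def couplings {E : Type*} [MeasurableSpace E] (μ ν : Measure E) : Set (Measure (E × E)) :=
  {π | π.fst = μ ∧ π.snd = ν}

/-- The `p`-Wasserstein distance, defined via the infimum of transport costs. -/
noncomputable def Wp {E : Type*} [MeasurableSpace E] [PseudoMetricSpace E]
    (p : ℝ) (μ ν : Measure E) : ℝ :=
  (sInf {c : ℝ | ∃ π ∈ couplings μ ν, c = ∫ z, dist z.1 z.2 ^ p ∂π}) ^ (1 / p)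

/-- The empirical measure of the points `x₁, …, x_N`. -/
noncomputable def empiricalMeasure {E : Type*} [MeasurableSpace E]
    (N : ℕ) (x : Fin N → E) : Measure E :=
  ((N : ℝ≥0∞))⁻¹ • ∑ i, Measure.dirac (x i)

section Empirical

variable {E : Type*} [MeasurableSpace E]

lemma isProbabilityMeasure_empiricalMeasure {N : ℕ} (hN : 0 < N) (x : Fin N → E) :
    IsProbabilityMeasure (empiricalMeasure N x) := by
  constructor
  simp [empiricalMeasure, ENNReal.inv_mul_cancel (Nat.cast_ne_zero.mpr hN.ne')]

variable [MeasurableSingletonClass E]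

lemma empiricalMeasure_compl_range {N : ℕ} (x : Fin N → E) :
    empiricalMeasure N x (Set.range x)ᶜ = 0 := by
  simp [empiricalMeasure, Measure.dirac_apply]

lemma integral_empiricalMeasure {N : ℕ} (x : Fin N → E) (h : E → ℝ) :
    ∫ y, h y ∂(empiricalMeasure N x) = (1 / (N : ℝ)) * ∑ i, h (x i) := by
  rw [empiricalMeasure, integral_smul_measure,
    integral_finsetSum_measure fun i _ => integrable_dirac enorm_lt_top]
  simp [integral_dirac]

end Empirical

section Lp

variable {α : Type*} [MeasurableSpace α] {μ : Measure α}

lemma memLp_of_continuous_of_measure_compl_eq_zero [TopologicalSpace α] [OpensMeasurableSpace α]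
    [IsFiniteMeasure μ] {K : Set α} (hK : IsCompact K) (hμK : μ Kᶜ = 0) {f : α → ℝ}
    (hf : Continuous f) (p : ℝ≥0∞) : MemLp f p μ := by
  obtain ⟨C, hC⟩ := hK.exists_bound_of_continuousOn hf.continuousOn
  exact MemLp.of_bound hf.aestronglyMeasurable C (Filter.mem_of_superset (mem_ae_iff.mpr hμK) hC)

lemma toReal_eLpNorm_ofReal {p : ℝ} (hp : 0 < p) {f : α → ℝ}
    (hf : MemLp f (ENNReal.ofReal p) μ) :
    (eLpNorm f (ENNReal.ofReal p) μ).toReal = (∫ x, |f x| ^ p ∂μ) ^ (1 / p) := by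
  rw [hf.eLpNorm_eq_integral_rpow_norm (by simpa using hp) ENNReal.ofReal_ne_top,
    ENNReal.toReal_ofReal hp.le, ENNReal.toReal_ofReal (by positivity), one_div]
  simp only [Real.norm_eq_abs]

end Lp

section Coupling

variable {E : Type*} [PseudoMetricSpace E] [MeasurableSpace E] [OpensMeasurableSpace E]
  {μ ν : Measure E} {π : Measure (E × E)}

lemma eLpNorm_le_add_mul_eLpNorm_dist {p : ℝ≥0∞} (hp : 1 ≤ p) (hπμ : π.fst = μ)
    (hπν : π.snd = ν) {g : E → ℝ} {L : ℝ≥0} (hg : LipschitzWith L g) :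
    eLpNorm g p μ ≤ eLpNorm g p ν + L * eLpNorm (fun z : E × E => dist z.1 z.2) p π := by
  have hgm : Measurable g := hg.continuous.measurable
  have hfst : eLpNorm g p μ = eLpNorm (g ∘ Prod.fst) p π := by
    rw [← hπμ, Measure.fst, eLpNorm_map_measure hgm.aestronglyMeasurable
      measurable_fst.aemeasurable]
  have hsnd : eLpNorm g p ν = eLpNorm (g ∘ Prod.snd) p π := by
    rw [← hπν, Measure.snd, eLpNorm_map_measure hgm.aestronglyMeasurable
      measurable_snd.aemeasurable]
  have hdiff : eLpNorm (g ∘ Prod.fst - g ∘ Prod.snd) p π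
      ≤ L * eLpNorm (fun z : E × E => dist z.1 z.2) p π := by
    refine eLpNorm_le_mul_eLpNorm_of_ae_le_mul' (ae_of_all _ fun z => ?_) p
    simpa [← edist_eq_enorm_sub, Real.enorm_of_nonneg dist_nonneg, ← edist_dist] using hg z.1 z.2
  calc eLpNorm g p μ = eLpNorm (g ∘ Prod.snd + (g ∘ Prod.fst - g ∘ Prod.snd)) p π := by
        rw [hfst, add_sub_cancel]
    _ ≤ eLpNorm (g ∘ Prod.snd) p π + eLpNorm (g ∘ Prod.fst - g ∘ Prod.snd) p π :=
        eLpNorm_add_le (hgm.comp measurable_snd).aestronglyMeasurable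
          ((hgm.comp measurable_fst).sub (hgm.comp measurable_snd)).aestronglyMeasurable hp
    _ ≤ eLpNorm g p ν + L * eLpNorm (fun z : E × E => dist z.1 z.2) p π := by
        rw [hsnd]; gcongr

lemma rpow_integral_le_add_mul_of_coupling [SecondCountableTopology E] {p : ℝ} (hp : 1 ≤ p)
    [IsFiniteMeasure μ] (hπμ : π.fst = μ) (hπν : π.snd = ν) {K : Set E} (hK : IsCompact K)
    (hμK : μ Kᶜ = 0) (hνK : ν Kᶜ = 0) {g : E → ℝ} {L : ℝ≥0} (hg : LipschitzWith L g) :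
    (∫ x, |g x| ^ p ∂μ) ^ (1 / p)
      ≤ (∫ x, |g x| ^ p ∂ν) ^ (1 / p) + L * (∫ z, dist z.1 z.2 ^ p ∂π) ^ (1 / p) := by
  have hp0 : 0 < p := zero_lt_one.trans_le hp
  have hq : 1 ≤ ENNReal.ofReal p := by simpa using hp
  have : IsFiniteMeasure π := ⟨by rw [← Measure.fst_univ, hπμ]; exact measure_lt_top μ _⟩
  have : IsFiniteMeasure ν := hπν ▸ inferInstance
  have hπK : π (K ×ˢ K)ᶜ = 0 := by
    have hfst : π.fst Kᶜ = 0 := by rwa [hπμ]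
    have hsnd : π.snd Kᶜ = 0 := by rwa [hπν]
    rw [Set.compl_prod_eq_union, Set.prod_univ, Set.univ_prod]
    exact measure_union_null (Measure.preimage_null_of_map_null measurable_fst.aemeasurable hfst)
      (Measure.preimage_null_of_map_null measurable_snd.aemeasurable hsnd)
  have hgμ := memLp_of_continuous_of_measure_compl_eq_zero hK hμK hg.continuous (.ofReal p)
  have hgν := memLp_of_continuous_of_measure_compl_eq_zero hK hνK hg.continuous (.ofReal p)
  have hdist := memLp_of_continuous_of_measure_compl_eq_zero (hK.prod hK) hπK
    continuous_dist (.ofReal p)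
  have hν_fin := hgν.eLpNorm_ne_top
  have hπ_fin : (L : ℝ≥0∞) * eLpNorm (fun z : E × E => dist z.1 z.2) (.ofReal p) π ≠ ∞ :=
    ENNReal.mul_ne_top ENNReal.coe_ne_top hdist.eLpNorm_ne_top
  have := ENNReal.toReal_mono (ENNReal.add_ne_top.mpr ⟨hν_fin, hπ_fin⟩)
    (eLpNorm_le_add_mul_eLpNorm_dist hq hπμ hπν hg)
  rw [ENNReal.toReal_add hν_fin hπ_fin, ENNReal.toReal_mul, ENNReal.coe_toReal,
    toReal_eLpNorm_ofReal hp0 hgμ, toReal_eLpNorm_ofReal hp0 hgν,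
    toReal_eLpNorm_ofReal hp0 hdist] at this
  simpa only [abs_dist] using this

end Coupling

section Wasserstein

variable {E : Type*} [MeasurableSpace E] [PseudoMetricSpace E]

lemma le_add_mul_Wp {p : ℝ} (hp : 0 < p) {μ ν : Measure E} (hne : (couplings μ ν).Nonempty)
    {a b L : ℝ} (h : ∀ π ∈ couplings μ ν, a ≤ b + L * (∫ z, dist z.1 z.2 ^ p ∂π) ^ (1 / p)) :
    a ≤ b + L * Wp p μ ν := by
  set T := {c : ℝ | ∃ π ∈ couplings μ ν, c = ∫ z, dist z.1 z.2 ^ p ∂π}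
  obtain ⟨π₀, hπ₀⟩ := hne
  have hTne : T.Nonempty := ⟨_, π₀, hπ₀, rfl⟩
  have hTbdd : BddBelow T := ⟨0, by rintro _ ⟨π, -, rfl⟩; positivity⟩
  have hF : Continuous fun t : ℝ => b + L * t ^ (1 / p) :=
    continuous_const.add (continuous_const.mul (Real.continuous_rpow_const (by positivity)))
  have hTF : closure T ⊆ {t | a ≤ b + L * t ^ (1 / p)} :=
    closure_minimal (by rintro _ ⟨π, hπ, rfl⟩; exact h π hπ) (isClosed_le continuous_const hF)
  exact hTF (csInf_mem_closure hTne hTbdd)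

lemma rpow_integral_le_add_mul_Wp [OpensMeasurableSpace E] [SecondCountableTopology E]
    {p : ℝ} (hp : 1 ≤ p) {μ ν : Measure E} [IsProbabilityMeasure μ] [IsProbabilityMeasure ν]
    {K : Set E} (hK : IsCompact K) (hμK : μ Kᶜ = 0) (hνK : ν Kᶜ = 0) {g : E → ℝ} {L : ℝ≥0}
    (hg : LipschitzWith L g) :
    (∫ x, |g x| ^ p ∂μ) ^ (1 / p) ≤ (∫ x, |g x| ^ p ∂ν) ^ (1 / p) + L * Wp p μ ν :=
  le_add_mul_Wp (by positivity) ⟨μ.prod ν, Measure.fst_prod, Measure.snd_prod⟩ fun _ hπ =>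
    rpow_integral_le_add_mul_of_coupling hp hπ.1 hπ.2 hK hμK hνK hg

end Wasserstein

theorem pathwise_generalisation_estimate_general {d : ℕ} (p : ℝ) (hp : 1 ≤ p)
    {Ω : Type*}
    (D : Set (EuclideanSpace ℝ (Fin d))) (hD : IsCompact D)
    (μ : Measure (EuclideanSpace ℝ (Fin d))) [IsProbabilityMeasure μ] (hμ : μ Dᶜ = 0)
    (X : ℕ → Ω → EuclideanSpace ℝ (Fin d))
    (f : EuclideanSpace ℝ (Fin d) → ℝ)
    (V : Set (EuclideanSpace ℝ (Fin d) → ℝ))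
    (N : ℕ) (hN : 0 < N)
    (u : Ω → EuclideanSpace ℝ (Fin d) → ℝ)
    (hmin : ∀ ω, ∀ v ∈ V,
      (1 / (N : ℝ)) * ∑ i : Fin N, |u ω (X i ω) - f (X i ω)| ^ p
        ≤ (1 / (N : ℝ)) * ∑ i : Fin N, |v (X i ω) - f (X i ω)| ^ p)
    (LX : Ω → ℝ≥0) (hLX : ∀ ω, LipschitzWith (LX ω) (fun x => u ω x - f x)) :
    ∀ ω, ∀ φ ∈ V,
      (∫ x, |u ω x - f x| ^ p ∂μ) ^ (1 / p)
        ≤ ((1 / (N : ℝ)) * ∑ i : Fin N, |φ (X i ω) - f (X i ω)| ^ p) ^ (1 / p)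
          + LX ω * Wp p μ (empiricalMeasure N (fun i => X i ω)) := by
  intro ω φ hφ
  set x : Fin N → EuclideanSpace ℝ (Fin d) := fun i => X i ω
  have := isProbabilityMeasure_empiricalMeasure hN x
  have hK : IsCompact (D ∪ Set.range x) := hD.union (Set.finite_range x).isCompact
  calc (∫ y, |u ω y - f y| ^ p ∂μ) ^ (1 / p)
      ≤ (∫ y, |u ω y - f y| ^ p ∂empiricalMeasure N x) ^ (1 / p)
          + LX ω * Wp p μ (empiricalMeasure N x) :=
        rpow_integral_le_add_mul_Wp hp hK
          (measure_mono_null (Set.compl_subset_compl.mpr Set.subset_union_left) hμ)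
          (measure_mono_null (Set.compl_subset_compl.mpr Set.subset_union_right)
            (empiricalMeasure_compl_range x))
          (hLX ω)
    _ ≤ _ := by
        rw [integral_empiricalMeasure]
        gcongr ?_ ^ _ + _
        exact hmin ω φ hφ

/-- Pathwise generalisation-error estimate: for every sample point `ω` and every `φ ∈ V`,
`‖u_N(ω) − f‖_{L^p(μ)} ≤ ((1/N)Σᵢ|φ(Xᵢ(ω)) − f(Xᵢ(ω))|^p)^{1/p} + L_{X(ω)} · W_p(μ, μ_{N,X(ω)})`. -/
theorem pathwise_generalisation_estimate {d : ℕ} (p : ℝ) (hp : 1 ≤ p)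
    {Ω : Type*} [MeasurableSpace Ω] (P : Measure Ω) [IsProbabilityMeasure P]
    (D : Set (EuclideanSpace ℝ (Fin d))) (hD : IsCompact D)
    (μ : Measure (EuclideanSpace ℝ (Fin d))) [IsProbabilityMeasure μ] (hμ : μ Dᶜ = 0)
    (X : ℕ → Ω → EuclideanSpace ℝ (Fin d)) (hXm : ∀ i, Measurable (X i))
    (hXlaw : ∀ i, Measure.map (X i) P = μ)
    (hindep : iIndepFun X P)
    (Kf : ℝ≥0) (f : EuclideanSpace ℝ (Fin d) → ℝ) (hf : LipschitzWith Kf f)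
    (V : Set (EuclideanSpace ℝ (Fin d) → ℝ))
    (hVLip : ∀ v ∈ V, ∃ K : ℝ≥0, LipschitzWith K v)
    (N : ℕ) (hN : 0 < N)
    (u : Ω → EuclideanSpace ℝ (Fin d) → ℝ) (huV : ∀ ω, u ω ∈ V)
    (hmin : ∀ ω, ∀ v ∈ V,
      (1 / (N : ℝ)) * ∑ i : Fin N, |u ω (X i ω) - f (X i ω)| ^ p
        ≤ (1 / (N : ℝ)) * ∑ i : Fin N, |v (X i ω) - f (X i ω)| ^ p)
    (LX : Ω → ℝ≥0) (hLX : ∀ ω, LipschitzWith (LX ω) (fun x => u ω x - f x)) :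
    ∀ ω, ∀ φ ∈ V,
      (∫ x, |u ω x - f x| ^ p ∂μ) ^ (1 / p)
        ≤ ((1 / (N : ℝ)) * ∑ i : Fin N, |φ (X i ω) - f (X i ω)| ^ p) ^ (1 / p)
          + LX ω * Wp p μ (empiricalMeasure N (fun i => X i ω)) :=
  pathwise_generalisation_estimate_general p hp D hD μ hμ X f V N hN u hmin LX hLX
end

section
/- Let X₁, X₂, … be i.i.d. with law μ on D, V a countable-or-arbitrary set of measurable functions, f measurable with v − f ∈ L^p(μ) for all v ∈ V, and u_N(ω) minimizers of the empirical loss E_{N,ω} over V. Then almost surely, limsup_{N→∞} E_{N,ω}(u_N(ω)) ≤ inf_{φ ∈ V} ‖φ − f‖_{L^p(μ)}^p. -/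
open MeasureTheory ProbabilityTheory Filter Topology

/-! For each fixed `φ ∈ V`, minimality bounds the empirical loss of `u_N` by the empirical mean
of `|φ - f|^p`, which converges almost surely to `‖φ - f‖_p^p` by the strong law of large
numbers; hence the limsup is almost surely at most `‖φ - f‖_p^p`. The infimum over `V` is
approached along a sequence in `V`, and intersecting the countably many full-measure events
gives the bound by the infimum. -/

/-- `g` is replaced by a measurable modification, which changes each `g ∘ X i` only on a
null set. -/
theorem strong_law_ae_comp {Ω E : Type*} [MeasurableSpace Ω] [MeasurableSpace E]
    {P : Measure Ω} {μ : Measure E} {X : ℕ → Ω → E} (hX : ∀ i, AEMeasurable (X i) P)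
    (hlaw : ∀ i, P.map (X i) = μ) (hindep : iIndepFun X P) {g : E → ℝ} (hg : Integrable g μ) :
    ∀ᵐ ω ∂P, Tendsto (fun n : ℕ => (∑ i ∈ Finset.range n, g (X i ω)) / n) atTop
      (𝓝 (∫ x, g x ∂μ)) := by
  set h := hg.aestronglyMeasurable.mk g
  have hh : StronglyMeasurable h := hg.aestronglyMeasurable.stronglyMeasurable_mk
  have hgh : g =ᵐ[μ] h := hg.aestronglyMeasurable.ae_eq_mk
  have hgh_comp : ∀ i, g ∘ X i =ᵐ[P] h ∘ X i := fun i =>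
    ae_eq_comp (hX i) (by rw [hlaw i]; exact hgh)
  have hint : Integrable (h ∘ X 0) P :=
    (integrable_map_measure hh.aestronglyMeasurable (hX 0)).mp (hlaw 0 ▸ hg.congr hgh)
  have hmean : ∫ ω, h (X 0 ω) ∂P = ∫ x, g x ∂μ := by
    rw [← integral_map (hX 0) hh.aestronglyMeasurable, hlaw 0]
    exact integral_congr_ae hgh.symm
  have hslln := strong_law_ae_real (fun i => h ∘ X i) hint
    (fun i j hij => (hindep.indepFun hij).comp hh.measurable hh.measurable)
    (fun i => IdentDistrib.comp ⟨hX i, hX 0, by rw [hlaw i, hlaw 0]⟩ hh.measurable)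
  filter_upwards [hslln, ae_all_iff.2 hgh_comp] with ω hω hgω
  simp only [Function.comp_apply] at hω hgω
  simpa only [hgω, hmean] using hω

theorem ae_le_ciInf_of_forall {Ω ι : Type*} [MeasurableSpace Ω] {P : Measure Ω} [Nonempty ι]
    {F : ι → ℝ} (hF : BddBelow (Set.range F)) {Y : Ω → ℝ} (h : ∀ i, ∀ᵐ ω ∂P, Y ω ≤ F i) :
    ∀ᵐ ω ∂P, Y ω ≤ ⨅ i, F i := by
  obtain ⟨w, -, hw, hwF⟩ := exists_seq_tendsto_sInf (Set.range_nonempty F) hF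
  choose j hj using hwF
  filter_upwards [ae_all_iff.2 fun n => h (j n)] with ω hω
  exact ge_of_tendsto' hw fun n => hj n ▸ hω n

theorem limsup_empirical_loss_le_general {d : ℕ} (p : ℝ)
    {Ω : Type*} [MeasurableSpace Ω] (P : Measure Ω)
    (μ : Measure (EuclideanSpace ℝ (Fin d)))
    (X : ℕ → Ω → EuclideanSpace ℝ (Fin d)) (hXm : ∀ i, Measurable (X i))
    (hXlaw : ∀ i, Measure.map (X i) P = μ)
    (hindep : iIndepFun X P)
    (V : Set (EuclideanSpace ℝ (Fin d) → ℝ)) (hVne : V.Nonempty)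
    (f : EuclideanSpace ℝ (Fin d) → ℝ)
    (hVLp : ∀ v ∈ V, Integrable (fun x => |v x - f x| ^ p) μ)
    (u : ℕ → Ω → EuclideanSpace ℝ (Fin d) → ℝ)
    (hmin : ∀ (N : ℕ) ω, ∀ v ∈ V,
      (1 / (N : ℝ)) * ∑ i ∈ Finset.range N, |u N ω (X i ω) - f (X i ω)| ^ p
        ≤ (1 / (N : ℝ)) * ∑ i ∈ Finset.range N, |v (X i ω) - f (X i ω)| ^ p) :
    ∀ᵐ ω ∂P,
      limsup (fun N : ℕ => (1 / (N : ℝ)) * ∑ i ∈ Finset.range N,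
          |u N ω (X i ω) - f (X i ω)| ^ p) atTop
        ≤ ⨅ φ : V, ∫ x, |(φ : EuclideanSpace ℝ (Fin d) → ℝ) x - f x| ^ p ∂μ := by
  have : Nonempty V := hVne.to_subtype
  refine ae_le_ciInf_of_forall ⟨0, ?_⟩ fun φ => ?_
  · rintro _ ⟨φ, rfl⟩
    exact integral_nonneg fun x => by positivity
  filter_upwards [strong_law_ae_comp (fun i => (hXm i).aemeasurable) hXlaw hindep
    (hVLp φ φ.2)] with ω hω
  rw [← hω.limsup_eq]
  refine limsup_le_limsup (Eventually.of_forall fun N => ?_)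
    (isCoboundedUnder_le_of_le atTop (x := 0) fun N => by positivity) hω.isBoundedUnder_le
  simpa only [one_div_mul_eq_div] using hmin N ω φ φ.2

/-- The limsup inequality: almost surely, the empirical losses of the minimizers are
asymptotically bounded by `inf_{φ ∈ V} ‖φ − f‖_{L^p(μ)}^p`. -/
theorem limsup_empirical_loss_le {d : ℕ} (p : ℝ) (hp : 1 ≤ p)
    {Ω : Type*} [MeasurableSpace Ω] (P : Measure Ω) [IsProbabilityMeasure P]
    (μ : Measure (EuclideanSpace ℝ (Fin d))) [IsProbabilityMeasure μ]
    (X : ℕ → Ω → EuclideanSpace ℝ (Fin d)) (hXm : ∀ i, Measurable (X i))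
    (hXlaw : ∀ i, Measure.map (X i) P = μ)
    (hindep : iIndepFun X P)
    (V : Set (EuclideanSpace ℝ (Fin d) → ℝ)) (hVne : V.Nonempty)
    (hVm : ∀ v ∈ V, Measurable v)
    (f : EuclideanSpace ℝ (Fin d) → ℝ) (hf : Measurable f)
    (hVLp : ∀ v ∈ V, Integrable (fun x => |v x - f x| ^ p) μ)
    (u : ℕ → Ω → EuclideanSpace ℝ (Fin d) → ℝ) (huV : ∀ (N : ℕ) ω, u N ω ∈ V)
    (hmin : ∀ (N : ℕ) ω, ∀ v ∈ V,
      (1 / (N : ℝ)) * ∑ i ∈ Finset.range N, |u N ω (X i ω) - f (X i ω)| ^ p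
        ≤ (1 / (N : ℝ)) * ∑ i ∈ Finset.range N, |v (X i ω) - f (X i ω)| ^ p) :
    ∀ᵐ ω ∂P,
      limsup (fun N : ℕ => (1 / (N : ℝ)) * ∑ i ∈ Finset.range N,
          |u N ω (X i ω) - f (X i ω)| ^ p) atTop
        ≤ ⨅ φ : V, ∫ x, |(φ : EuclideanSpace ℝ (Fin d) → ℝ) x - f x| ^ p ∂μ :=
  limsup_empirical_loss_le_general p P μ X hXm hXlaw hindep V hVne f hVLp u hmin
end
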